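/- In the trefoil rewriting system ℜ'' with rules x₁ → x₄⁻¹x₃, x₃x₁⁻¹ → x₂⁻¹x₃, x₁⁻¹x₄⁻¹ → x₃⁻¹, x₂ → x₁⁻¹x₃, x₃x₂⁻¹ → x₄⁻¹x₃, x₂⁻¹x₁⁻¹ → x₃⁻¹, x₄ → x₂⁻¹x₃, x₃x₄⁻¹ → x₁⁻¹x₃, x₄⁻¹x₂⁻¹ → x₃⁻¹, x₃⁻¹x₂⁻¹ → x₁⁻¹x₃⁻¹, x₃⁻¹x₁⁻¹ → x₄⁻¹x₃⁻¹, x₃⁻¹x₄⁻¹ → x₂⁻¹x₃⁻¹, together with all free cancellations x_i x_i⁻¹ → ε and x_i⁻¹ x_i → ε (0 ≤ i ≤ 4), every rule application strictly decreases the lexicographic measure V(w) = (V₁, V₂, V₃, V₄) described in the paper; hence the system is terminating. -/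

import Mathlib

/-- The alphabet of the rewriting system ℜ'' for the trefoil knot group:
the generators x₀,…,x₄ and their formal inverses. -/
inductive L3 where
  | x0 | x1 | x2 | x3 | x4 | ix0 | ix1 | ix2 | ix3 | ix4
deriving DecidableEq

open L3

/-- Formal inversion on the alphabet. -/
def inv3 : L3 → L3
  | x0 => ix0 | ix0 => x0 | x1 => ix1 | ix1 => x1 | x2 => ix2 | ix2 => x2
  | x3 => ix3 | ix3 => x3 | x4 => ix4 | ix4 => x4

/-- Sources: x₀, x₃ and their inverses; all other letters are sinks. -/
def isS3 : L3 → Bool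
  | x0 => true | ix0 => true | x3 => true | ix3 => true | _ => false

/-- T⁺ = {x₁, x₂, x₄}: the positive sinks bordering the unbounded region. -/
def isTp3 : L3 → Bool
  | x1 => true | x2 => true | x4 => true | _ => false

/-- Number of sink letters of a word. -/
def sinkCount3 (w : List L3) : ℕ := w.countP fun a => !isS3 a

/-- V₃(w) = Σ_j Σ_{i=0}^{k−j} 2^i n_j from the block decomposition: each source
letter contributes 2^m − 1 where m is the number of sink letters to its right. -/
def V3' : List L3 → ℕ
  | [] => 0
  | a :: w => (if isS3 a then 2 ^ sinkCount3 w - 1 else 0) + V3' w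

/-- The measure V(w) = (V₁(w), V₂(w), V₃(w), V₄(w)). -/
def Vm (w : List L3) : ℕ × ℕ × ℕ × ℕ :=
  (sinkCount3 w, w.countP isTp3, V3' w, w.length)

/-- The rules of the trefoil rewriting system ℜ'', with all free cancellations. -/
def R3 : Set (List L3 × List L3) :=
  {([x1], [ix4, x3]), ([x3, ix1], [ix2, x3]), ([ix1, ix4], [ix3]),
   ([x2], [ix1, x3]), ([x3, ix2], [ix4, x3]), ([ix2, ix1], [ix3]),
   ([x4], [ix2, x3]), ([x3, ix4], [ix1, x3]), ([ix4, ix2], [ix3]),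
   ([ix3, ix2], [ix1, ix3]), ([ix3, ix1], [ix4, ix3]), ([ix3, ix4], [ix2, ix3])} ∪
  {p | ∃ a : L3, p = ([a, inv3 a], ([] : List L3))} ∪
  {p | ∃ a : L3, p = ([inv3 a, a], ([] : List L3))}

/-! A rule application `u l v → u r v` changes `V₁, V₂, V₄` by the change on `l → r` alone, and
changes `V₃` by the change of the source weights of `l → r` measured against the `m` sinks of `v`,
plus a change in the contribution of `u`, which vanishes as soon as `V₁` is unchanged. So it
suffices to compare `l` and `r` for every `m`: the rules `x₁ → x₄⁻¹x₃` (and the like) trade a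
`T⁺`-letter for a negative sink, the rules moving a sink leftwards across a source lower that
source's weight from `2^(m+1) - 1` to `2^m - 1`, and the remaining rules delete sinks. A cancelled
pair of sources loses weight, or, when no sinks follow, only length. -/

open L3

/-- `V₃` of `w` followed by `m` further sinks, counting only the sources inside `w`. -/
def sourceWeight : List L3 → ℕ → ℕ
  | [], _ => 0
  | a :: w, m => (if isS3 a then 2 ^ (sinkCount3 w + m) - 1 else 0) + sourceWeight w m

def localMeasure (w : List L3) (m : ℕ) : ℕ × ℕ × ℕ × ℕ :=
  (sinkCount3 w, w.countP isTp3, sourceWeight w m, w.length)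

abbrev Lex4 : ℕ × ℕ × ℕ × ℕ → ℕ × ℕ × ℕ × ℕ → Prop :=
  Prod.Lex (· < ·) (Prod.Lex (· < ·) (Prod.Lex (· < ·) (· < ·)))

lemma lex4_iff {a b c d a' b' c' d' : ℕ} :
    Lex4 (a, b, c, d) (a', b', c', d') ↔
      a < a' ∨ a = a' ∧ (b < b' ∨ b = b' ∧ (c < c' ∨ c = c' ∧ d < d')) := by
  simp only [Prod.lex_def]

lemma sinkCount3_append (u v : List L3) :
    sinkCount3 (u ++ v) = sinkCount3 u + sinkCount3 v :=
  List.countP_append ..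

lemma V3'_append (u w : List L3) :
    V3' (u ++ w) = sourceWeight u (sinkCount3 w) + V3' w := by
  induction u with
  | nil => simp [sourceWeight]
  | cons a u ih =>
    simp only [List.cons_append, V3', sourceWeight, ih, sinkCount3_append]
    omega

lemma Vm_append_lt_of_localMeasure_lt {l r : List L3}
    (h : ∀ m, Lex4 (localMeasure r m) (localMeasure l m)) (u v : List L3) :
    Lex4 (Vm (u ++ r ++ v)) (Vm (u ++ l ++ v)) := by
  have hV3 (w : List L3) : V3' (u ++ w ++ v) =
      sourceWeight u (sinkCount3 w + sinkCount3 v) + (sourceWeight w (sinkCount3 v) + V3' v) := by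
    rw [List.append_assoc, V3'_append, V3'_append, sinkCount3_append]
  have hlr := h (sinkCount3 v)
  simp only [Vm, localMeasure, hV3, sinkCount3_append, List.countP_append, List.length_append,
    lex4_iff] at hlr ⊢
  rcases hlr with hlt | ⟨heq, hrest⟩
  · omega
  · rw [heq]
    omega

lemma localMeasure_lt_of_cancel (a : L3) (m : ℕ) :
    Lex4 (localMeasure [] m) (localMeasure [a, inv3 a] m) := by
  have hpos : 1 < 2 ^ m ↔ m ≠ 0 := Nat.one_lt_two_pow_iff
  cases a <;>
  simp only [localMeasure, sourceWeight, sinkCount3, isS3, isTp3, inv3, lex4_iff, List.countP_cons,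
    List.countP_nil, List.length_cons, List.length_nil, Bool.not_true, Bool.not_false,
    Bool.false_eq_true, zero_add, add_zero, true_and, ↓reduceIte] <;>
  omega

lemma inv3_inv3 (a : L3) : inv3 (inv3 a) = a := by
  cases a <;> rfl

lemma localMeasure_lt_of_mem_R3 {l r : List L3} (h : (l, r) ∈ R3) (m : ℕ) :
    Lex4 (localMeasure r m) (localMeasure l m) := by
  rcases h with (hknot | ⟨a, ha⟩) | ⟨a, ha⟩
  · have hpow : 2 ^ (1 + m) = 2 * 2 ^ m := by rw [pow_add, pow_one]
    have hpos : 1 ≤ 2 ^ m := Nat.one_le_two_pow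
    simp only [Set.mem_insert_iff, Set.mem_singleton_iff, Prod.mk.injEq] at hknot
    rcases hknot with ⟨rfl, rfl⟩ | ⟨rfl, rfl⟩ | ⟨rfl, rfl⟩ | ⟨rfl, rfl⟩ | ⟨rfl, rfl⟩ | ⟨rfl, rfl⟩ |
      ⟨rfl, rfl⟩ | ⟨rfl, rfl⟩ | ⟨rfl, rfl⟩ | ⟨rfl, rfl⟩ | ⟨rfl, rfl⟩ | ⟨rfl, rfl⟩ <;>
    simp only [localMeasure, sourceWeight, sinkCount3, isS3, isTp3, lex4_iff, List.countP_cons,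
      List.countP_nil, List.length_cons, List.length_nil, Bool.not_true, Bool.not_false,
      Bool.false_eq_true, zero_add, add_zero, true_and, ↓reduceIte] <;>
    omega
  · obtain ⟨rfl, rfl⟩ := Prod.mk.inj ha
    exact localMeasure_lt_of_cancel a m
  · obtain ⟨rfl, rfl⟩ := Prod.mk.inj ha
    simpa only [inv3_inv3] using localMeasure_lt_of_cancel (inv3 a) m

/-- Every rule application in the trefoil system ℜ'' strictly decreases the
lexicographic measure V; hence the system is terminating. -/
theorem stmt_13 :
    (∀ u v l r, (l, r) ∈ R3 →
      Prod.Lex (· < ·) (Prod.Lex (· < ·) (Prod.Lex (· < ·) (· < ·)))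
        (Vm (u ++ r ++ v)) (Vm (u ++ l ++ v))) ∧
    ¬ ∃ f : ℕ → List L3, ∀ n, ∃ u v l r,
      (l, r) ∈ R3 ∧ f n = u ++ l ++ v ∧ f (n + 1) = u ++ r ++ v := by
  have decreasing (u v l r : List L3) (h : (l, r) ∈ R3) :
      Lex4 (Vm (u ++ r ++ v)) (Vm (u ++ l ++ v)) :=
    Vm_append_lt_of_localMeasure_lt (localMeasure_lt_of_mem_R3 h) u v
  refine ⟨decreasing, ?_⟩
  rintro ⟨f, hf⟩
  obtain ⟨n, hn⟩ := WellFounded.not_rel_apply_succ (r := Lex4) (fun n => Vm (f n))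
  obtain ⟨u, v, l, r, hR, hl, hr⟩ := hf n
  exact hn (hl ▸ hr ▸ decreasing u v l r hR)
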